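/- arXiv:2306.09834 — 5 statements merged into one kernel-verified Lean document; each statement's English description precedes it below -/
import Mathlib

section
/- Let γ be a positive integer and let t = (2γ−1)(γ+1). Let P''_t be the graph obtained by taking a path on t vertices and adding two new vertices u and v, each adjacent to every vertex of the path (u and v are also adjacent to each other). If φ is a coloring of the vertices of P''_t using at most 3 colors such that every connected monochromatic subgraph has at most γ vertices, then φ(u) = φ(v). -/
/-- The graph `P''_t`: the complete join of two adjacent vertices with a path on `t` vertices. -/
def pathJoin2 (t : ℕ) : SimpleGraph (Fin t ⊕ Fin 2) :=
  SimpleGraph.fromRel (fun a b => match a, b with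
    | Sum.inl i, Sum.inl j => (i : ℕ) + 1 = (j : ℕ)
    | Sum.inl _, Sum.inr _ => True
    | Sum.inr _, Sum.inl _ => False
    | Sum.inr i, Sum.inr j => i ≠ j)

lemma fin3_eq (a b x y : Fin 3) (hab : a ≠ b) (hxa : x ≠ a) (hxb : x ≠ b)
    (hya : y ≠ a) (hyb : y ≠ b) : x = y := by
  revert hab hxa hxb hya hyb; revert a b x y; decide

lemma hub_adj (t : ℕ) (i : Fin t) (k : Fin 2) :
    (pathJoin2 t).Adj (Sum.inl i) (Sum.inr k) := by
  rw [pathJoin2, SimpleGraph.fromRel_adj]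
  exact ⟨by simp, Or.inl trivial⟩

lemma hub_connected (t : ℕ) (X : Set (Fin t)) (k : Fin 2) :
    ((pathJoin2 t).induce (insert (Sum.inr k) (Sum.inl '' X))).Connected := by
  set S : Set (Fin t ⊕ Fin 2) := insert (Sum.inr k) (Sum.inl '' X) with hS
  have hhub : (Sum.inr k : Fin t ⊕ Fin 2) ∈ S := Set.mem_insert _ _
  rw [SimpleGraph.connected_iff]
  refine ⟨?_, ⟨⟨_, hhub⟩⟩⟩
  have key : ∀ z : S, ((pathJoin2 t).induce S).Reachable z ⟨_, hhub⟩ := by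
    rintro ⟨z, hz⟩
    rcases hz with rfl | ⟨i, hi, rfl⟩
    · exact SimpleGraph.Reachable.refl _
    · exact SimpleGraph.Adj.reachable (hub_adj t i k)
  intro x y
  exact (key x).trans (key y).symm

lemma path_adj (t : ℕ) (i j : Fin t) (h : (i : ℕ) + 1 = (j : ℕ)) :
    (pathJoin2 t).Adj (Sum.inl i) (Sum.inl j) := by
  rw [pathJoin2, SimpleGraph.fromRel_adj]
  refine ⟨?_, Or.inl h⟩
  intro hc
  have : i = j := by injection hc
  omega

lemma interval_connected (t m γ : ℕ) (hm : m + (γ + 1) ≤ t) :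
    ((pathJoin2 t).induce
      (Sum.inl '' {i : Fin t | m ≤ (i : ℕ) ∧ (i : ℕ) < m + (γ + 1)})).Connected := by
  set W : Set (Fin t) := {i : Fin t | m ≤ (i : ℕ) ∧ (i : ℕ) < m + (γ + 1)} with hW
  set S : Set (Fin t ⊕ Fin 2) := Sum.inl '' W with hS
  have hmem : ∀ d : ℕ, (hd : d ≤ γ) → (Sum.inl (⟨m + d, by omega⟩ : Fin t) : Fin t ⊕ Fin 2) ∈ S := by
    intro d hd
    refine ⟨⟨m + d, by omega⟩, ?_, rfl⟩
    show m ≤ m + d ∧ m + d < m + (γ + 1)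
    omega
  have h0 : (Sum.inl (⟨m, by omega⟩ : Fin t) : Fin t ⊕ Fin 2) ∈ S := by
    simpa using hmem 0 (Nat.zero_le _)
  rw [SimpleGraph.connected_iff]
  refine ⟨?_, ⟨⟨_, h0⟩⟩⟩
  have aux : ∀ d : ℕ, (hd : d ≤ γ) →
      ((pathJoin2 t).induce S).Reachable ⟨_, hmem d hd⟩ ⟨_, h0⟩ := by
    intro d
    induction d with
    | zero => intro _; exact SimpleGraph.Reachable.refl _
    | succ n ih =>
      intro hd
      have hn : n ≤ γ := by omega
      have hadj : ((pathJoin2 t).induce S).Adj ⟨_, hmem (n+1) hd⟩ ⟨_, hmem n hn⟩ := by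
        have := path_adj t ⟨m + n, by omega⟩ ⟨m + n + 1, by omega⟩ (by simp)
        exact this.symm
      exact hadj.reachable.trans (ih hn)
  have key : ∀ z : S, ((pathJoin2 t).induce S).Reachable z ⟨_, h0⟩ := by
    rintro ⟨z, hz⟩
    obtain ⟨i, hi, rfl⟩ := hz
    have hd : (i : ℕ) - m ≤ γ := by rcases hi with ⟨h1, h2⟩; omega
    have heq : (⟨Sum.inl i, ⟨i, hi, rfl⟩⟩ : S) = ⟨_, hmem ((i : ℕ) - m) hd⟩ := by
      apply Subtype.ext
      simp only []
      congr 1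
      apply Fin.ext
      simp
      rcases hi with ⟨h1, h2⟩; omega
    rw [heq]
    exact aux _ hd
  intro x y
  exact (key x).trans (key y).symm

/-- If `φ` is a 3-coloring of `P''_t` with `t = (2γ-1)(γ+1)` in which every connected
monochromatic subgraph has at most `γ` vertices, then the two join vertices get equal colors. -/
theorem stmt0 (γ : ℕ) (hγ : 0 < γ) (t : ℕ) (ht : t = (2 * γ - 1) * (γ + 1))
    (φ : (Fin t ⊕ Fin 2) → Fin 3)
    (hclust : ∀ S : Set (Fin t ⊕ Fin 2),
      (∀ u ∈ S, ∀ v ∈ S, φ u = φ v) → ((pathJoin2 t).induce S).Connected →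
      S.ncard ≤ γ) :
    φ (Sum.inr 0) = φ (Sum.inr 1) := by
  by_contra hne
  set a := φ (Sum.inr 0) with ha
  set b := φ (Sum.inr 1) with hb
  -- color classes on path
  set Na : Set (Fin t) := {i | φ (Sum.inl i) = a} with hNa
  set Nb : Set (Fin t) := {i | φ (Sum.inl i) = b} with hNb
  -- claim 1 : |Na| + 1 ≤ γ
  have claim1 : ∀ (k : Fin 2) (N : Set (Fin t)), (∀ i ∈ N, φ (Sum.inl i) = φ (Sum.inr k)) →
      N.ncard + 1 ≤ γ := by
    intro k N hN
    have hmono : ∀ u ∈ insert (Sum.inr k) (Sum.inl '' N),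
        ∀ v ∈ insert (Sum.inr k) (Sum.inl '' N), φ u = φ v := by
      rintro u hu v hv
      have hcol : ∀ w ∈ insert (Sum.inr k) (Sum.inl '' N), φ w = φ (Sum.inr k) := by
        rintro w (rfl | ⟨i, hi, rfl⟩)
        · rfl
        · exact hN i hi
      rw [hcol u hu, hcol v hv]
    have hcard := hclust _ hmono (hub_connected t N k)
    have hnm : (Sum.inr k : Fin t ⊕ Fin 2) ∉ Sum.inl '' N := by simp
    rw [Set.ncard_insert_of_notMem hnm, Set.ncard_image_of_injective _ Sum.inl_injective] at hcard
    omega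
  have hNa1 : Na.ncard + 1 ≤ γ := claim1 0 Na (fun i hi => hi)
  have hNb1 : Nb.ncard + 1 ≤ γ := claim1 1 Nb (fun i hi => hi)
  -- claim 2 : each window has an a/b vertex
  have hwit : ∀ k : Fin (2 * γ - 1), ∃ i : Fin t,
      ((k : ℕ) * (γ + 1) ≤ (i : ℕ) ∧ (i : ℕ) < ((k : ℕ) + 1) * (γ + 1)) ∧ i ∈ Na ∪ Nb := by
    intro k
    by_contra hno
    push_neg at hno
    set m := (k : ℕ) * (γ + 1) with hm
    have hkt : m + (γ + 1) ≤ t := by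
      have : (k : ℕ) + 1 ≤ 2 * γ - 1 := k.isLt
      calc m + (γ + 1) = ((k : ℕ) + 1) * (γ + 1) := by ring
        _ ≤ (2 * γ - 1) * (γ + 1) := Nat.mul_le_mul_right _ this
        _ = t := ht.symm
    set W : Set (Fin t) := {i : Fin t | m ≤ (i : ℕ) ∧ (i : ℕ) < m + (γ + 1)} with hW
    have hnoc : ∀ i ∈ W, φ (Sum.inl i) ≠ a ∧ φ (Sum.inl i) ≠ b := by
      intro i hi
      simp only [hW, Set.mem_setOf_eq] at hi
      have he : ((k : ℕ) + 1) * (γ + 1) = m + (γ + 1) := by rw [hm]; ring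
      have := hno i ⟨hi.1, by omega⟩
      simp [hNa, hNb, Set.mem_union] at this
      exact ⟨this.1, this.2⟩
    have hmono : ∀ u ∈ Sum.inl '' W, ∀ v ∈ Sum.inl '' W, φ u = φ v := by
      rintro u ⟨i, hi, rfl⟩ v ⟨j, hj, rfl⟩
      obtain ⟨h1, h2⟩ := hnoc i hi
      obtain ⟨h3, h4⟩ := hnoc j hj
      exact fin3_eq a b _ _ hne h1 h2 h3 h4
    have hcard := hclust _ hmono (interval_connected t m γ hkt)
    -- but the window has γ+1 elements
    have hginj : Function.Injective (fun j : Fin (γ + 1) =>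
        (Sum.inl (⟨m + (j : ℕ), by omega⟩ : Fin t) : Fin t ⊕ Fin 2)) := by
      intro x y hxy
      simp only [Sum.inl.injEq, Fin.mk.injEq] at hxy
      exact Fin.ext (by omega)
    have hsub : Set.range (fun j : Fin (γ + 1) =>
        (Sum.inl (⟨m + (j : ℕ), by omega⟩ : Fin t) : Fin t ⊕ Fin 2)) ⊆ Sum.inl '' W := by
      rintro x ⟨j, rfl⟩
      refine ⟨⟨m + (j : ℕ), by omega⟩, ?_, rfl⟩
      show m ≤ m + (j : ℕ) ∧ m + (j : ℕ) < m + (γ + 1)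
      omega
    have hrange : (Set.range (fun j : Fin (γ + 1) =>
        (Sum.inl (⟨m + (j : ℕ), by omega⟩ : Fin t) : Fin t ⊕ Fin 2))).ncard = γ + 1 := by
      rw [← Set.image_univ, Set.ncard_image_of_injective _ hginj, Set.ncard_univ,
        Nat.card_eq_fintype_card, Fintype.card_fin]
    have := Set.ncard_le_ncard hsub (Set.toFinite _)
    omega
  choose F hF1 hF2 using hwit
  -- F injective
  have hFinj : Function.Injective F := by
    intro k k' h
    have h1 := hF1 k
    have h2 := hF1 k'
    rw [h] at h1
    apply Fin.ext
    have e1 : ((F k' : ℕ)) / (γ + 1) = (k : ℕ) :=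
      Nat.div_eq_of_lt_le h1.1 (by simpa using h1.2)
    have e2 : ((F k' : ℕ)) / (γ + 1) = (k' : ℕ) :=
      Nat.div_eq_of_lt_le h2.1 (by simpa using h2.2)
    omega
  have hrangeF : (Set.range F).ncard = 2 * γ - 1 := by
    rw [← Set.image_univ, Set.ncard_image_of_injective _ hFinj, Set.ncard_univ,
      Nat.card_eq_fintype_card, Fintype.card_fin]
  have hsubF : Set.range F ⊆ Na ∪ Nb := by rintro x ⟨k, rfl⟩; exact hF2 k
  have hle := Set.ncard_le_ncard hsubF (Set.toFinite _)
  have hunion := Set.ncard_union_le Na Nb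
  omega
end

section
/- Let γ be a positive integer and t = 9(2γ−1)(γ+1). Then the graph P''_t is not 3-choosable with clustering at most γ: there exists an assignment L of lists of size 3 to the vertices of P''_t such that every L-coloring of P''_t has a connected monochromatic subgraph with more than γ vertices. -/
/-!
Write `u = inr 0`, `v = inr 1`. The path is cut into nine blocks of `(2γ - 1)(γ + 1)` vertices,
one for each pair `(i, j) ∈ {1,2,3} × {4,5,6}`, and the vertices of block `(i, j)` get the list
`{i, j, 7}`. Whatever colours `i, j` the vertices `u, v` receive, look at block `(i, j)`. If `γ` of
its vertices are coloured `i` (or `j`), they form a monochromatic star with `u` (or `v`).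
Otherwise fewer than `2γ - 1` of its vertices avoid colour `7`, so one of the `2γ - 1` segments of
`γ + 1` consecutive vertices into which the block splits is entirely coloured `7`.
-/

open SimpleGraph

variable {V : Type*}

def ExceedsClustering (G : SimpleGraph V) (φ : V → ℕ) (γ : ℕ) : Prop :=
  ∃ S : Set V, (∀ u ∈ S, ∀ v ∈ S, φ u = φ v) ∧ (G.induce S).Connected ∧ γ < S.ncard

lemma connected_induce_insert_of_forall_adj {G : SimpleGraph V} {u : V} {s : Set V}
    (hadj : ∀ v ∈ s, G.Adj u v) : (G.induce (insert u s)).Connected := by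
  refine G.induce_connected_of_patches u (Set.mem_insert u s) fun {v} hv => ?_
  rcases hv with rfl | hv
  · exact ⟨{v}, by simp, rfl, rfl, .rfl⟩
  · exact ⟨{u, v}, Set.insert_subset_insert (Set.singleton_subset_iff.2 hv), by simp, by simp,
      (induce_pair_connected_of_adj (hadj v hv)).preconnected _ _⟩

lemma exceedsClustering_of_forall_adj [Finite V] {G : SimpleGraph V} {φ : V → ℕ} {γ : ℕ}
    {u : V} {s : Set V} (hadj : ∀ v ∈ s, G.Adj u v) (hcol : ∀ v ∈ s, φ v = φ u)
    (hs : γ ≤ s.ncard) : ExceedsClustering G φ γ := by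
  have hcol' : ∀ v ∈ insert u s, φ v = φ u := by
    rintro v (rfl | hv)
    exacts [rfl, hcol v hv]
  refine ⟨insert u s, fun v hv w hw => (hcol' v hv).trans (hcol' w hw).symm,
    connected_induce_insert_of_forall_adj hadj, ?_⟩
  rw [Set.ncard_insert_of_notMem fun hu => (hadj u hu).ne rfl]
  omega

lemma exists_Ico_disjoint_of_card_lt (N : Finset ℕ) {m : ℕ} (hN : N.card < m) (a n : ℕ) :
    ∃ s < m, ∀ k ∈ Set.Ico (a + s * n) (a + s * n + n), k ∉ N := by
  obtain ⟨s, hs, hsN⟩ := Finset.exists_mem_notMem_of_card_lt_card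
    (s := N.image fun k => (k - a) / n) (t := Finset.range m)
    ((Finset.card_image_le).trans_lt (by simpa using hN))
  refine ⟨s, Finset.mem_range.1 hs, fun k ⟨hk₁, hk₂⟩ hkN => hsN (Finset.mem_image.2 ⟨k, hkN, ?_⟩)⟩
  exact Nat.div_eq_of_lt_le (by omega) (by rw [Nat.succ_mul]; omega)

namespace pathJoin2

lemma adj_inr_inl (t : ℕ) (r : Fin 2) (i : Fin t) : (pathJoin2 t).Adj (.inr r) (.inl i) := by
  simp [pathJoin2]

lemma adj_inl_inl {t : ℕ} {i j : Fin t} (h : (i : ℕ) + 1 = j) :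
    (pathJoin2 t).Adj (.inl i) (.inl j) := by
  simp only [pathJoin2, fromRel_adj, ne_eq, Sum.inl.injEq, Fin.ext_iff, h, true_or, and_true]
  omega

lemma connected_induce_inl_Ico {t a b : ℕ} (hab : a < b) (hbt : b ≤ t) :
    ((pathJoin2 t).induce (Sum.inl '' (Fin.val ⁻¹' Set.Ico a b))).Connected := by
  induction b, hab using Nat.le_induction with
  | base =>
    have : Fin.val ⁻¹' Set.Ico a (a + 1) = {(⟨a, hbt⟩ : Fin t)} := by
      ext i
      simp only [Set.mem_preimage, Set.mem_Ico, Set.mem_singleton_iff, Fin.ext_iff]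
      omega
    rw [this, Set.image_singleton, induce_singleton_eq_top]
    exact connected_top
  | succ b hab ih =>
    have : Fin.val ⁻¹' Set.Ico a (b + 1) = Fin.val ⁻¹' Set.Ico a b ∪ {(⟨b, hbt⟩ : Fin t)} := by
      ext i
      simp only [Set.mem_preimage, Set.mem_union, Set.mem_Ico, Set.mem_singleton_iff, Fin.ext_iff]
      omega
    rw [this, Set.image_union, Set.image_singleton]
    have hprev : (⟨b - 1, by omega⟩ : Fin t) ∈ Fin.val ⁻¹' Set.Ico a b :=
      Set.mem_Ico.2 ⟨(by omega : a ≤ b - 1), (by omega : b - 1 < b)⟩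
    exact connected_induce_union (ih (by omega)).preconnected
      (by rw [induce_singleton_eq_top]; exact connected_top.preconnected)
      (Set.mem_image_of_mem Sum.inl hprev) rfl (adj_inl_inl (Nat.sub_add_cancel (by omega)))

lemma exceedsClustering_of_segment {t a γ c : ℕ} {φ : Fin t ⊕ Fin 2 → ℕ} (hat : a + (γ + 1) ≤ t)
    (hcol : ∀ i : Fin t, ↑i ∈ Set.Ico a (a + (γ + 1)) → φ (.inl i) = c) :
    ExceedsClustering (pathJoin2 t) φ γ := by
  refine ⟨Sum.inl '' (Fin.val ⁻¹' Set.Ico a (a + (γ + 1))), ?_,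
    connected_induce_inl_Ico (by omega) hat, ?_⟩
  · rintro _ ⟨i, hi, rfl⟩ _ ⟨j, hj, rfl⟩
    rw [hcol i hi, hcol j hj]
  · have hsub : Set.Ico a (a + (γ + 1)) ⊆ Set.range (Fin.val : Fin t → ℕ) := by
      rw [Fin.range_val]
      exact fun k hk => Set.mem_Iio.2 (hk.2.trans_le hat)
    rw [Set.ncard_image_of_injective _ Sum.inl_injective,
      Set.ncard_preimage_of_injective_subset_range Fin.val_injective hsub, Set.ncard_Ico_nat]
    omega

lemma exceedsClustering_of_inr {t γ : ℕ} {φ : Fin t ⊕ Fin 2 → ℕ} (r : Fin 2) (A : Finset (Fin t))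
    (hA : ∀ i ∈ A, φ (.inl i) = φ (.inr r)) (hγ : γ ≤ A.card) :
    ExceedsClustering (pathJoin2 t) φ γ :=
  exceedsClustering_of_forall_adj (u := .inr r) (s := Sum.inl '' A)
    (by rintro _ ⟨i, -, rfl⟩; exact adj_inr_inl t r i)
    (by rintro _ ⟨i, hi, rfl⟩; exact hA i hi)
    (by rwa [Set.ncard_image_of_injective _ Sum.inl_injective, Set.ncard_coe_finset])

lemma exceedsClustering_of_block {t a γ c : ℕ} {φ : Fin t ⊕ Fin 2 → ℕ}
    (hat : a + (2 * γ - 1) * (γ + 1) ≤ t)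
    (hblock : ∀ i : Fin t, ↑i ∈ Set.Ico a (a + (2 * γ - 1) * (γ + 1)) →
      φ (.inl i) = φ (.inr 0) ∨ φ (.inl i) = φ (.inr 1) ∨ φ (.inl i) = c) :
    ExceedsClustering (pathJoin2 t) φ γ := by
  classical
  set B := Finset.univ.filter fun i : Fin t => ↑i ∈ Set.Ico a (a + (2 * γ - 1) * (γ + 1))
  set A : Fin 2 → Finset (Fin t) := fun r => B.filter fun i => φ (.inl i) = φ (.inr r)
  by_cases h0 : γ ≤ (A 0).card
  · exact exceedsClustering_of_inr 0 (A 0) (fun i hi => (Finset.mem_filter.1 hi).2) h0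
  by_cases h1 : γ ≤ (A 1).card
  · exact exceedsClustering_of_inr 1 (A 1) (fun i hi => (Finset.mem_filter.1 hi).2) h1
  set N := (B.filter fun i => φ (.inl i) ≠ c).image Fin.val
  have hN : N.card < 2 * γ - 1 := by
    have hsub : B.filter (fun i => φ (.inl i) ≠ c) ⊆ A 0 ∪ A 1 := by
      intro i hi
      simp only [A, Finset.mem_union, Finset.mem_filter] at hi ⊢
      have := hblock i (Finset.mem_filter.1 hi.1).2
      tauto
    calc N.card ≤ (B.filter fun i => φ (.inl i) ≠ c).card := Finset.card_image_le
      _ ≤ (A 0 ∪ A 1).card := Finset.card_le_card hsub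
      _ ≤ (A 0).card + (A 1).card := Finset.card_union_le _ _
      _ < 2 * γ - 1 := by omega
  obtain ⟨s, hs, hsN⟩ := exists_Ico_disjoint_of_card_lt N hN a (γ + 1)
  have hseg : a + s * (γ + 1) + (γ + 1) ≤ a + (2 * γ - 1) * (γ + 1) := by
    have := Nat.mul_le_mul_right (γ + 1) (Nat.succ_le_of_lt hs)
    rw [Nat.succ_mul] at this
    omega
  refine exceedsClustering_of_segment (c := c) (hat.trans' hseg) fun i hi => ?_
  by_contra hne
  refine hsN i hi (Finset.mem_image_of_mem _ (Finset.mem_filter.2 ⟨?_, hne⟩))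
  exact Finset.mem_filter.2 ⟨Finset.mem_univ _, hi.1.trans' (by omega), hi.2.trans_le hseg⟩

/-- Path vertex `i` lies in block `b = i / M`, which is the paper's `P_{i',j'}` for
`b = 3 (i' - 1) + (j' - 4)`. -/
def lists (t M : ℕ) : Fin t ⊕ Fin 2 → Finset ℕ
  | .inl i => {i / M / 3 + 1, i / M % 3 + 4, 7}
  | .inr r => if r = 0 then {1, 2, 3} else {4, 5, 6}

lemma card_lists {t M : ℕ} (ht : t ≤ 9 * M) (v : Fin t ⊕ Fin 2) : (lists t M v).card = 3 := by
  rcases v with i | r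
  · have : (i : ℕ) / M < 9 := Nat.div_lt_of_lt_mul (by omega)
    simp only [lists]
    rw [Finset.card_insert_of_notMem
        (by simp only [Finset.mem_insert, Finset.mem_singleton]; omega),
      Finset.card_insert_of_notMem (by simp only [Finset.mem_singleton]; omega),
      Finset.card_singleton]
  · simp only [lists]
    split_ifs <;> rfl

end pathJoin2

theorem stmt2_general (γ : ℕ) (t : ℕ) (ht : t = 9 * ((2 * γ - 1) * (γ + 1))) :
    ∃ L : (Fin t ⊕ Fin 2) → Finset ℕ, (∀ v, (L v).card = 3) ∧
      ∀ φ : (Fin t ⊕ Fin 2) → ℕ, (∀ v, φ v ∈ L v) →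
        ∃ S : Set (Fin t ⊕ Fin 2), (∀ u ∈ S, ∀ v ∈ S, φ u = φ v) ∧
          ((pathJoin2 t).induce S).Connected ∧ γ < S.ncard := by
  set M := (2 * γ - 1) * (γ + 1)
  refine ⟨pathJoin2.lists t M, pathJoin2.card_lists ht.le, fun φ hφ => ?_⟩
  have hu : φ (.inr 0) = 1 ∨ φ (.inr 0) = 2 ∨ φ (.inr 0) = 3 := by
    simpa [pathJoin2.lists] using hφ (.inr 0)
  have hv : φ (.inr 1) = 4 ∨ φ (.inr 1) = 5 ∨ φ (.inr 1) = 6 := by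
    simpa [pathJoin2.lists] using hφ (.inr 1)
  -- the block whose vertices have the list `{φ (inr 0), φ (inr 1), 7}`
  set b := 3 * (φ (.inr 0) - 1) + (φ (.inr 1) - 4)
  have hb : b * M + M ≤ t := by
    rw [← Nat.succ_mul, ht]
    exact Nat.mul_le_mul_right M (by omega)
  refine pathJoin2.exceedsClustering_of_block (a := b * M) (c := 7) hb fun i hi => ?_
  have hib : (i : ℕ) / M = b := Nat.div_eq_of_lt_le hi.1 (by rw [Nat.succ_mul]; exact hi.2)
  have := hφ (.inl i)
  simp only [pathJoin2.lists, hib, Finset.mem_insert, Finset.mem_singleton] at this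
  omega

/-- For `t = 9(2γ-1)(γ+1)`, the graph `P''_t` is not 3-choosable with clustering at most `γ`:
there is an assignment of lists of size 3 such that every coloring from the lists has a
connected monochromatic subgraph with more than `γ` vertices. -/
theorem stmt2 (γ : ℕ) (hγ : 0 < γ) (t : ℕ) (ht : t = 9 * ((2 * γ - 1) * (γ + 1))) :
    ∃ L : (Fin t ⊕ Fin 2) → Finset ℕ, (∀ v, (L v).card = 3) ∧
      ∀ φ : (Fin t ⊕ Fin 2) → ℕ, (∀ v, φ v ∈ L v) →
        ∃ S : Set (Fin t ⊕ Fin 2), (∀ u ∈ S, ∀ v ∈ S, φ u = φ v) ∧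
          ((pathJoin2 t).induce S).Connected ∧ γ < S.ncard :=
  stmt2_general γ t ht
end

section
/- Let G_k denote the complete rooted planar 3-tree of depth k (G_0 is a triangle; G_k has each of its three children equal to a copy of G_{k−1}). Let C = v1v2v3 bound the outer face and precolor ψ(v_i) = i for i ∈ {1,2,3}. Then in every extension of ψ to a 3-coloring of G_k (colors {1,2,3}), the sum of the sizes of the clusters containing v1, v2, and v3 is at least k + 3; hence every such coloring has clustering at least k/3 + 1. -/
/-! Whatever color the tip of `G_{k+1}` receives, it agrees with exactly one outer vertex `w`,
and the inner triangle avoiding `w` is rainbow. The cluster of `w` then contains `w` together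
with the whole cluster of the tip inside that inner copy, so passing from the copy to `G_{k+1}`
raises the sum of the three outer cluster sizes by at least one; for `G_0` the sum is `3`. -/

/-- `CRP3T G k S a b c`: `S` carries (inside `G`) the complete rooted planar 3-tree `G_k` of
depth `k` with outer triangle `a b c`: for `k = 0` it is a triangle, and for `k+1` a tip `v`
is joined to the outer triangle and each of the three resulting triangles carries a copy of
`G_k`, overlapping only in shared triangle vertices and with no edges between interiors. -/
inductive CRP3T {V : Type*} (G : SimpleGraph V) : ℕ → Set V → V → V → V → Prop
  | base : ∀ a b c : V, a ≠ b → a ≠ c → b ≠ c → G.Adj a b → G.Adj a c → G.Adj b c →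
      CRP3T G 0 {a, b, c} a b c
  | step : ∀ (k : ℕ) (S S₁ S₂ S₃ : Set V) (a b c v : V),
      v ∉ ({a, b, c} : Set V) →
      G.Adj v a → G.Adj v b → G.Adj v c →
      CRP3T G k S₁ a b v → CRP3T G k S₂ a c v → CRP3T G k S₃ b c v →
      S = S₁ ∪ S₂ ∪ S₃ →
      S₁ ∩ S₂ = {a, v} → S₁ ∩ S₃ = {b, v} → S₂ ∩ S₃ = {c, v} →
      (∀ x ∈ S₁, ∀ y ∈ S₂, x ∉ S₂ → y ∉ S₁ → ¬ G.Adj x y) →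
      (∀ x ∈ S₁, ∀ y ∈ S₃, x ∉ S₃ → y ∉ S₁ → ¬ G.Adj x y) →
      (∀ x ∈ S₂, ∀ y ∈ S₃, x ∉ S₃ → y ∉ S₂ → ¬ G.Adj x y) →
      CRP3T G (k + 1) S a b c

/-- `T` is a cluster of the coloring `φ` within `S`: a maximal monochromatic set inducing a
connected subgraph. -/
def IsClusterIn {V : Type*} (G : SimpleGraph V) (φ : V → Fin 3) (S T : Set V) : Prop :=
  T ⊆ S ∧ (∀ u ∈ T, ∀ v ∈ T, φ u = φ v) ∧ (G.induce T).Connected ∧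
    ∀ T' : Set V, T ⊆ T' → T' ⊆ S → (∀ u ∈ T', ∀ v ∈ T', φ u = φ v) →
      (G.induce T').Connected → T' = T

open SimpleGraph

section MonoComp

variable {V α : Type*} {G : SimpleGraph V} {φ : V → α} {S S' T : Set V} {x y z v : V}

def monoGraph (G : SimpleGraph V) (φ : V → α) (S : Set V) : SimpleGraph V where
  Adj x y := G.Adj x y ∧ φ x = φ y ∧ x ∈ S ∧ y ∈ S
  symm := ⟨fun _ _ ⟨hadj, hφ, hx, hy⟩ => ⟨hadj.symm, hφ.symm, hy, hx⟩⟩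
  loopless := ⟨fun x h => G.loopless.irrefl x h.1⟩

lemma monoGraph_adj :
    (monoGraph G φ S).Adj x y ↔ G.Adj x y ∧ φ x = φ y ∧ x ∈ S ∧ y ∈ S := Iff.rfl

lemma monoGraph_le : monoGraph G φ S ≤ G := fun _ _ h => (monoGraph_adj.1 h).1

def monoComp (G : SimpleGraph V) (φ : V → α) (S : Set V) (x : V) : Set V :=
  ((monoGraph G φ S).connectedComponentMk x).supp

lemma mem_monoComp : y ∈ monoComp G φ S x ↔ (monoGraph G φ S).Reachable x y :=
  ConnectedComponent.eq.trans reachable_comm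

lemma mem_monoComp_self : x ∈ monoComp G φ S x := ConnectedComponent.connectedComponentMk_mem

lemma monoComp_mono (hS : S' ⊆ S) : monoComp G φ S' x ⊆ monoComp G φ S x := fun _ hy =>
  mem_monoComp.2 <| (mem_monoComp.1 hy).mono fun _ _ h =>
    have ⟨hadj, hφ, hu, hv⟩ := monoGraph_adj.1 h
    ⟨hadj, hφ, hS hu, hS hv⟩

lemma monoComp_eq_of_adj (h : (monoGraph G φ S).Adj x y) : monoComp G φ S x = monoComp G φ S y :=
  congrArg ConnectedComponent.supp (ConnectedComponent.connectedComponentMk_eq_of_adj h)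

lemma mem_and_color_eq_of_monoGraph_reachable (h : (monoGraph G φ S).Reachable x y) (hx : x ∈ S) :
    y ∈ S ∧ φ y = φ x := by
  obtain ⟨p⟩ := h
  induction p with
  | nil => exact ⟨hx, rfl⟩
  | cons hadj _ ih =>
    obtain ⟨-, hφ, -, hu⟩ := monoGraph_adj.1 hadj
    obtain ⟨hy, hφ'⟩ := ih hu
    exact ⟨hy, hφ'.trans hφ.symm⟩

lemma monoComp_subset (hx : x ∈ S) : monoComp G φ S x ⊆ S := fun _ hy =>
  (mem_and_color_eq_of_monoGraph_reachable (mem_monoComp.1 hy) hx).1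

lemma color_eq_of_mem_monoComp (hx : x ∈ S) (hy : y ∈ monoComp G φ S x) : φ y = φ x :=
  (mem_and_color_eq_of_monoGraph_reachable (mem_monoComp.1 hy) hx).2

lemma connected_induce_monoComp : (G.induce (monoComp G φ S x)).Connected :=
  (ConnectedComponent.connected_toSimpleGraph _).mono (comap_monotone _ monoGraph_le)

lemma subset_monoComp (hTS : T ⊆ S) (hT : ∀ u ∈ T, ∀ v ∈ T, φ u = φ v)
    (hconn : (G.induce T).Preconnected) (hx : x ∈ T) : T ⊆ monoComp G φ S x := fun y hy =>
  mem_monoComp.2 <| (hconn ⟨x, hx⟩ ⟨y, hy⟩).map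
    ⟨Subtype.val, fun {u v} h => monoGraph_adj.2 ⟨h, hT _ u.2 _ v.2, hTS u.2, hTS v.2⟩⟩

lemma ncard_monoComp_le (hS : S' ⊆ S) (hfin : S.Finite) (hx : x ∈ S) :
    (monoComp G φ S' x).ncard ≤ (monoComp G φ S x).ncard :=
  Set.ncard_le_ncard (monoComp_mono hS) (hfin.subset (monoComp_subset hx))

lemma ncard_monoComp_add_one_le (hS : S' ⊆ S) (hfin : S.Finite) (hv : v ∈ S') (hzS : z ∈ S)
    (hz : z ∉ S') (hadj : G.Adj z v) (hφ : φ z = φ v) :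
    (monoComp G φ S' v).ncard + 1 ≤ (monoComp G φ S z).ncard := by
  have hzv : z ∉ monoComp G φ S' v := fun h => hz (monoComp_subset hv h)
  have hsub : insert z (monoComp G φ S' v) ⊆ monoComp G φ S z :=
    Set.insert_subset mem_monoComp_self <| (monoComp_mono hS).trans
      (monoComp_eq_of_adj (monoGraph_adj.2 ⟨hadj, hφ, hzS, hS hv⟩)).ge
  calc (monoComp G φ S' v).ncard + 1 = (insert z (monoComp G φ S' v)).ncard :=
        (Set.ncard_insert_of_notMem hzv ((hfin.subset hS).subset (monoComp_subset hv))).symm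
    _ ≤ (monoComp G φ S z).ncard :=
        Set.ncard_le_ncard hsub (hfin.subset (monoComp_subset hzS))

lemma add_one_le_sum_ncard_monoComp (hS : S' ⊆ S) (hfin : S.Finite) (hx : x ∈ S') (hy : y ∈ S')
    (hv : v ∈ S') (hzS : z ∈ S) (hz : z ∉ S') (hadj : G.Adj z v) (hφ : φ z = φ v) {n : ℕ}
    (hn : n ≤ (monoComp G φ S' x).ncard + (monoComp G φ S' y).ncard + (monoComp G φ S' v).ncard) :
    n + 1 ≤ (monoComp G φ S x).ncard + (monoComp G φ S y).ncard + (monoComp G φ S z).ncard := by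
  have := ncard_monoComp_le (G := G) (φ := φ) hS hfin (hS hx)
  have := ncard_monoComp_le (G := G) (φ := φ) hS hfin (hS hy)
  have := ncard_monoComp_add_one_le hS hfin hv hzS hz hadj hφ
  omega

end MonoComp

section Cluster

variable {V : Type*} {G : SimpleGraph V} {φ : V → Fin 3} {S T : Set V} {x : V}

lemma isClusterIn_monoComp (hx : x ∈ S) : IsClusterIn G φ S (monoComp G φ S x) :=
  ⟨monoComp_subset hx,
    fun _ hu _ hv => (color_eq_of_mem_monoComp hx hu).trans (color_eq_of_mem_monoComp hx hv).symm,
    connected_induce_monoComp,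
    fun _ hsub hT'S hT' hconn =>
      (subset_monoComp hT'S hT' hconn.preconnected (hsub mem_monoComp_self)).antisymm hsub⟩

lemma IsClusterIn.eq_monoComp (hT : IsClusterIn G φ S T) (hx : x ∈ T) : T = monoComp G φ S x :=
  have ⟨hTS, hTφ, hconn, hmax⟩ := hT
  have := isClusterIn_monoComp (G := G) (φ := φ) (hTS hx)
  (hmax _ (subset_monoComp hTS hTφ hconn.preconnected hx) this.1 this.2.1 this.2.2.1).symm

end Cluster

lemma Set.notMem_of_inter_eq_pair {α : Type*} {A B : Set α} {p q z : α} (hzA : z ∈ A)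
    (hAB : A ∩ B = {p, q}) (hzp : z ≠ p) (hzq : z ≠ q) : z ∉ B := fun hzB => by
  have : z ∈ ({p, q} : Set α) := hAB ▸ ⟨hzA, hzB⟩
  simp_all

lemma Fin.eq_or_eq_or_eq_of_ne : ∀ x y z w : Fin 3, x ≠ y → x ≠ z → y ≠ z →
    w = x ∨ w = y ∨ w = z := by
  decide

namespace CRP3T

variable {V : Type*} {G : SimpleGraph V} {k : ℕ} {S : Set V} {a b c : V}

lemma finite (h : CRP3T G k S a b c) : S.Finite := by
  induction h with
  | base => exact Set.toFinite _
  | step _ _ _ _ _ _ _ _ _ _ _ _ _ _ _ _ hS _ _ _ _ _ _ ih₁ ih₂ ih₃ =>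
    exact hS ▸ (ih₁.union ih₂).union ih₃

lemma mem (h : CRP3T G k S a b c) : a ∈ S ∧ b ∈ S ∧ c ∈ S := by
  induction h with
  | base => simp
  | step _ _ _ _ _ _ _ _ _ _ _ _ _ _ _ _ hS _ _ _ _ _ _ ih₁ ih₂ _ =>
    subst hS
    exact ⟨Or.inl (Or.inl ih₁.1), Or.inl (Or.inl ih₁.2.1), Or.inl (Or.inr ih₂.2.1)⟩

theorem add_three_le_sum_ncard_monoComp {φ : V → Fin 3} (h : CRP3T G k S a b c)
    (hab : φ a ≠ φ b) (hac : φ a ≠ φ c) (hbc : φ b ≠ φ c) :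
    k + 3 ≤ (monoComp G φ S a).ncard + (monoComp G φ S b).ncard + (monoComp G φ S c).ncard := by
  induction h with
  | base a b c =>
    have hpos : ∀ x ∈ ({a, b, c} : Set V), 0 < (monoComp G φ {a, b, c} x).ncard := fun x hx =>
      (Set.ncard_pos ((Set.toFinite _).subset (monoComp_subset hx))).2 ⟨x, mem_monoComp_self⟩
    have := hpos a (by simp); have := hpos b (by simp); have := hpos c (by simp)
    omega
  | step k S S₁ S₂ S₃ a b c v hv hva hvb hvc h₁ h₂ h₃ hS h₁₂ h₁₃ h₂₃ _ _ _ ih₁ ih₂ ih₃ =>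
    have hfin : S.Finite := hS ▸ (h₁.finite.union h₂.finite).union h₃.finite
    have hS₁ : S₁ ⊆ S := hS ▸ Set.subset_union_left.trans Set.subset_union_left
    have hS₂ : S₂ ⊆ S := hS ▸ Set.subset_union_right.trans Set.subset_union_left
    have hS₃ : S₃ ⊆ S := hS ▸ Set.subset_union_right
    obtain ⟨ha₁, hb₁, hv₁⟩ := h₁.mem
    obtain ⟨ha₂, hc₂, hv₂⟩ := h₂.mem
    obtain ⟨hb₃, hc₃, hv₃⟩ := h₃.mem
    have hav : a ≠ v := fun e => hv (e ▸ by simp)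
    have hbv : b ≠ v := fun e => hv (e ▸ by simp)
    have hcv : c ≠ v := fun e => hv (e ▸ by simp)
    rcases Fin.eq_or_eq_or_eq_of_ne _ _ _ (φ v) hab hac hbc with hφ | hφ | hφ
    · have := add_one_le_sum_ncard_monoComp hS₃ hfin hb₃ hc₃ hv₃ (hS₁ ha₁)
        (Set.notMem_of_inter_eq_pair ha₁ h₁₃ (ne_of_apply_ne φ hab) hav) hva.symm hφ.symm
        (ih₃ hbc (hφ ▸ hab.symm) (hφ ▸ hac.symm))
      omega
    · have := add_one_le_sum_ncard_monoComp hS₂ hfin ha₂ hc₂ hv₂ (hS₁ hb₁)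
        (Set.notMem_of_inter_eq_pair hb₁ h₁₂ (ne_of_apply_ne φ hab.symm) hbv) hvb.symm hφ.symm
        (ih₂ hac (hφ ▸ hab) (hφ ▸ hbc.symm))
      omega
    · have := add_one_le_sum_ncard_monoComp hS₁ hfin ha₁ hb₁ hv₁ (hS₂ hc₂)
        (Set.notMem_of_inter_eq_pair hc₂ (Set.inter_comm S₁ S₂ ▸ h₁₂)
          (ne_of_apply_ne φ hac.symm) hcv) hvc.symm hφ.symm
        (ih₁ hab (hφ ▸ hac) (hφ ▸ hbc))
      omega

end CRP3T

theorem stmt15_general {V : Type*} (G : SimpleGraph V) (k : ℕ) (S : Set V)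
    (a b c : V) (h : CRP3T G k S a b c)
    (φ : V → Fin 3) (ha : φ a = 0) (hb : φ b = 1) (hc : φ c = 2) :
    (∀ T₁ T₂ T₃ : Set V, IsClusterIn G φ S T₁ → IsClusterIn G φ S T₂ →
      IsClusterIn G φ S T₃ → a ∈ T₁ → b ∈ T₂ → c ∈ T₃ →
      k + 3 ≤ T₁.ncard + T₂.ncard + T₃.ncard) ∧
    ∃ T : Set V, T ⊆ S ∧ (∀ u ∈ T, ∀ v ∈ T, φ u = φ v) ∧ (G.induce T).Connected ∧
      k + 3 ≤ 3 * T.ncard := by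
  have hsum := h.add_three_le_sum_ncard_monoComp (φ := φ) (by simp [ha, hb]) (by simp [ha, hc])
    (by simp [hb, hc])
  refine ⟨fun T₁ T₂ T₃ h₁ h₂ h₃ ha₁ hb₂ hc₃ => ?_, ?_⟩
  · rwa [h₁.eq_monoComp ha₁, h₂.eq_monoComp hb₂, h₃.eq_monoComp hc₃]
  · obtain ⟨haS, hbS, hcS⟩ := h.mem
    obtain ⟨x, hx, hlarge⟩ : ∃ x ∈ S, k + 3 ≤ 3 * (monoComp G φ S x).ncard := by
      by_contra! hsmall
      have := hsmall a haS; have := hsmall b hbS; have := hsmall c hcS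
      omega
    obtain ⟨hsub, hφ, hconn, -⟩ := isClusterIn_monoComp (G := G) (φ := φ) hx
    exact ⟨_, hsub, hφ, hconn, hlarge⟩

/-- In every 3-coloring of the complete rooted planar 3-tree of depth `k` giving the outer
triangle three distinct colors, the sizes of the clusters of the three outer vertices sum to
at least `k + 3`; hence some cluster has size at least `k/3 + 1`. -/
theorem stmt15 {V : Type*} [Fintype V] (G : SimpleGraph V) (k : ℕ) (S : Set V)
    (a b c : V) (h : CRP3T G k S a b c)
    (φ : V → Fin 3) (ha : φ a = 0) (hb : φ b = 1) (hc : φ c = 2) :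
    (∀ T₁ T₂ T₃ : Set V, IsClusterIn G φ S T₁ → IsClusterIn G φ S T₂ →
      IsClusterIn G φ S T₃ → a ∈ T₁ → b ∈ T₂ → c ∈ T₃ →
      k + 3 ≤ T₁.ncard + T₂.ncard + T₃.ncard) ∧
    ∃ T : Set V, T ⊆ S ∧ (∀ u ∈ T, ∀ v ∈ T, φ u = φ v) ∧ (G.induce T).Connected ∧
      k + 3 ≤ 3 * T.ncard :=
  stmt15_general G k S a b c h φ ha hb hc
end

section
/- The complete rooted planar 3-tree of depth k contains a path on k+1 vertices all of whose vertices are adjacent to two fixed adjacent vertices; equivalently, G_k contains P''_{k+1} as a subgraph. -/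
private lemma crp3t_facts {V : Type*} {G : SimpleGraph V} {k : ℕ} {S : Set V} {a b c : V}
    (h : CRP3T G k S a b c) :
    (a ∈ S ∧ b ∈ S ∧ c ∈ S) ∧ (a ≠ b ∧ a ≠ c ∧ b ≠ c) ∧
      (G.Adj a b ∧ G.Adj a c ∧ G.Adj b c) := by
  induction h with
  | base a b c hab hac hbc h1 h2 h3 =>
    refine ⟨⟨?_, ?_, ?_⟩, ⟨hab, hac, hbc⟩, h1, h2, h3⟩ <;> simp
  | step k S S₁ S₂ S₃ a b c v hv h1 h2 h3 t1 t2 t3 hS i12 i13 i23 n1 n2 n3 ih1 ih2 ih3 =>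
    obtain ⟨⟨ha1, hb1, -⟩, ⟨hab, -, -⟩, ⟨hAab, -, -⟩⟩ := ih1
    obtain ⟨⟨-, hc2, -⟩, ⟨hac, -, -⟩, ⟨hAac, -, -⟩⟩ := ih2
    obtain ⟨⟨-, hc3, -⟩, ⟨hbc, -, -⟩, ⟨hAbc, -, -⟩⟩ := ih3
    subst hS
    exact ⟨⟨Or.inl (Or.inl ha1), Or.inl (Or.inl hb1), Or.inl (Or.inr hc2)⟩,
      ⟨hab, hac, hbc⟩, hAab, hAac, hAbc⟩

private lemma crp3t_path {V : Type*} {G : SimpleGraph V} {k : ℕ} {S : Set V} {a b c : V}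
    (h : CRP3T G k S a b c) :
    ∃ p : ℕ → V, p 0 = c ∧
      (∀ i j, i ≤ k → j ≤ k → p i = p j → i = j) ∧
      (∀ i, i ≤ k → p i ∈ S ∧ p i ≠ a ∧ p i ≠ b ∧ G.Adj (p i) a ∧ G.Adj (p i) b) ∧
      (∀ i, i + 1 ≤ k → G.Adj (p i) (p (i + 1))) := by
  induction h with
  | base a b c hab hac hbc h1 h2 h3 =>
    refine ⟨fun _ => c, rfl, by omega, ?_, by omega⟩
    intro i _
    exact ⟨by simp, fun h => hac h.symm, fun h => hbc h.symm, h2.symm, h3.symm⟩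
  | step k S S₁ S₂ S₃ a b c v hv h1 h2 h3 t1 t2 t3 hS i12 i13 i23 n1 n2 n3 ih1 ih2 ih3 =>
    obtain ⟨w, hw0, winj, wmem, wadj⟩ := ih1
    obtain ⟨⟨-, hc2, -⟩, ⟨hac, -, -⟩, ⟨hAac, -, -⟩⟩ := crp3t_facts t2
    obtain ⟨⟨-, hc3, -⟩, ⟨hbc, -, -⟩, ⟨hAbc, -, -⟩⟩ := crp3t_facts t3
    have hcS₁ : c ∉ S₁ := by
      intro hc
      have hmem : c ∈ S₁ ∩ S₂ := ⟨hc, hc2⟩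
      rw [i12] at hmem
      rcases hmem with h | h
      · exact hac h.symm
      · simp only [Set.mem_singleton_iff] at h
        exact hv (by simp [← h])
    subst hS
    refine ⟨fun n => if n = 0 then c else w (n - 1), by simp, ?_, ?_, ?_⟩
    · intro i j hi hj hij
      by_cases hi0 : i = 0 <;> by_cases hj0 : j = 0 <;> simp [hi0, hj0] at hij ⊢
      · exact absurd (hij ▸ (wmem (j - 1) (by omega)).1) hcS₁
      · exact absurd (hij ▸ (wmem (i - 1) (by omega)).1) hcS₁
      · have := winj (i - 1) (j - 1) (by omega) (by omega) hij
        omega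
    · intro i hi
      by_cases hi0 : i = 0 <;> simp [hi0]
      · exact ⟨Or.inl (Or.inr hc2), fun h => hac h.symm, fun h => hbc h.symm,
          hAac.symm, hAbc.symm⟩
      · obtain ⟨hm, hna, hnb, hAa, hAb⟩ := wmem (i - 1) (by omega)
        exact ⟨Or.inl (Or.inl hm), hna, hnb, hAa, hAb⟩
    · intro i hi
      by_cases hi0 : i = 0 <;> simp [hi0]
      · rw [hw0]; exact h3.symm
      · have := wadj (i - 1) (by omega)
        rwa [show i - 1 + 1 = i by omega] at this

/-- The complete rooted planar 3-tree of depth `k` contains `P''_{k+1}` as a subgraph. -/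
theorem stmt16 {V : Type*} (G : SimpleGraph V) (k : ℕ) (S : Set V) (a b c : V)
    (h : CRP3T G k S a b c) :
    ∃ f : (Fin (k + 1) ⊕ Fin 2) → V, Function.Injective f ∧ (∀ x, f x ∈ S) ∧
      ∀ x y, (pathJoin2 (k + 1)).Adj x y → G.Adj (f x) (f y) := by
  obtain ⟨p, hp0, pinj, pmem, padj⟩ := crp3t_path h
  obtain ⟨⟨haS, hbS, -⟩, ⟨hab, -, -⟩, ⟨hAab, -, -⟩⟩ := crp3t_facts h
  refine ⟨Sum.elim (fun i => p i) (fun j => if j = 0 then a else b), ?_, ?_, ?_⟩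
  · intro x y hxy
    cases x with
    | inl i =>
      cases y with
      | inl j =>
        simp only [Sum.elim_inl] at hxy
        exact congrArg Sum.inl (Fin.ext (pinj i j (by omega) (by omega) hxy))
      | inr j =>
        exfalso
        simp only [Sum.elim_inl, Sum.elim_inr] at hxy
        obtain ⟨-, hna, hnb, -, -⟩ := pmem i (by omega)
        split at hxy
        · exact hna hxy
        · exact hnb hxy
    | inr i =>
      cases y with
      | inl j =>
        exfalso
        simp only [Sum.elim_inl, Sum.elim_inr] at hxy
        obtain ⟨-, hna, hnb, -, -⟩ := pmem j (by omega)
        split at hxy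
        · exact hna hxy.symm
        · exact hnb hxy.symm
      | inr j =>
        simp only [Sum.elim_inr] at hxy
        fin_cases i <;> fin_cases j <;> simp_all
  · intro x
    cases x with
    | inl i => exact (pmem i (by omega)).1
    | inr j =>
      simp only [Sum.elim_inr]
      split
      · exact haS
      · exact hbS
  · intro x y hxy
    obtain ⟨hne, hr⟩ := hxy
    cases x with
    | inl i =>
      cases y with
      | inl j =>
        simp only [Sum.elim_inl]
        rcases hr with hr | hr
        · rw [show (j : ℕ) = (i : ℕ) + 1 from hr.symm]
          exact padj i (by omega)
        · rw [show (i : ℕ) = (j : ℕ) + 1 from hr.symm]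
          exact (padj j (by omega)).symm
      | inr j =>
        simp only [Sum.elim_inl, Sum.elim_inr]
        obtain ⟨-, -, -, hAa, hAb⟩ := pmem i (by omega)
        split
        · exact hAa
        · exact hAb
    | inr i =>
      cases y with
      | inl j =>
        simp only [Sum.elim_inl, Sum.elim_inr]
        obtain ⟨-, -, -, hAa, hAb⟩ := pmem j (by omega)
        split
        · exact hAa.symm
        · exact hAb.symm
      | inr j =>
        have hij : i ≠ j := fun h => hne (by rw [h])
        simp only [Sum.elim_inr]
        fin_cases i <;> fin_cases j <;> simp_all
        exact hAab.symm
end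

section
/- Let v be a vertex of degree 4 in a graph G, let L(v) be a list of 3 colors, and let φ0 be a coloring of the neighbors of v such that at most one neighbor is 'big'. Call a color c ∈ L(v) dangerous if either c appears on two distinct neighbors of v lying in different clusters of φ0 restricted to G − v, or c appears on the big neighbor. If the four neighbors of v induce a cycle in G − v (so non-big neighbors that share a color and are adjacent lie in the same cluster), then at most two colors in L(v) are dangerous, and coloring v with a non-dangerous color merges no two distinct clusters of φ0 and gives v a color different from its big neighbor. -/
/-- `x` and `y` lie in a common monochromatic connected subgraph contained in `W`
(i.e. in the same cluster of the coloring restricted to `W`). -/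
def SameCluster {V : Type*} (G : SimpleGraph V) (φ : V → ℕ) (W : Set V) (x y : V) : Prop :=
  ∃ T : Set V, T ⊆ W ∧ (∀ u ∈ T, ∀ v ∈ T, φ u = φ v) ∧ (G.induce T).Connected ∧
    x ∈ T ∧ y ∈ T

/-- A color `c` is dangerous at `v` (w.r.t. big set `B`): it appears on two distinct
neighbors of `v` lying in different clusters of the coloring of `G − v`, or on a big
neighbor. -/
def Dangerous {V : Type*} (G : SimpleGraph V) (φ₀ : V → ℕ) (v : V) (B : Set V)
    (c : ℕ) : Prop :=
  (∃ x y : V, G.Adj v x ∧ G.Adj v y ∧ x ≠ y ∧ φ₀ x = c ∧ φ₀ y = c ∧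
    ¬ SameCluster G φ₀ {v}ᶜ x y) ∨ ∃ x ∈ B, φ₀ x = c

/-- Two adjacent vertices with the same color, both different from `v`, lie in the same
cluster of the coloring restricted to `{v}ᶜ`. -/
lemma sameCluster_of_adj {V : Type*} (G : SimpleGraph V) (φ : V → ℕ) (v x y : V)
    (hx : x ≠ v) (hy : y ≠ v) (hxy : G.Adj x y) (hc : φ x = φ y) :
    SameCluster G φ {v}ᶜ x y := by
  refine ⟨{x, y}, ?_, ?_, ?_, by simp, by simp⟩
  · rintro z (rfl | rfl) <;> simpa
  · rintro a (rfl | rfl) b (rfl | rfl) <;> first | rfl | exact hc | exact hc.symm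
  · rw [SimpleGraph.connected_iff]
    refine ⟨?_, ⟨⟨x, by simp⟩⟩⟩
    have key : ∀ (p q : V) (hp : p ∈ ({x, y} : Set V)) (hq : q ∈ ({x, y} : Set V)),
        p = x → q = y → (G.induce {x, y}).Reachable ⟨p, hp⟩ ⟨q, hq⟩ := by
      rintro p q hp hq rfl rfl
      exact SimpleGraph.Adj.reachable (by simp [SimpleGraph.comap_adj, hxy])
    rintro ⟨a, ha⟩ ⟨b, hb⟩
    rcases ha with ha | ha <;> rcases hb with hb | hb
    · exact (show (⟨a, _⟩ : ({x, y} : Set V)) = ⟨b, _⟩ from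
        Subtype.ext (ha.trans hb.symm)) ▸ SimpleGraph.Reachable.refl _
    · exact key a b _ _ ha hb
    · exact (key b a _ _ hb ha).symm
    · exact (show (⟨a, _⟩ : ({x, y} : Set V)) = ⟨b, _⟩ from
        Subtype.ext (ha.trans hb.symm)) ▸ SimpleGraph.Reachable.refl _

/-- The (FOUR) sparsifier step: if `v` has exactly the four neighbors `u₁, u₂, u₃, u₄`
forming a cycle, at most one of which is big, then at most two of the three colors on `v`'s
list are dangerous; coloring `v` with a non-dangerous color merges no two distinct clusters
and differs from the color of the big neighbor. -/
theorem stmt18 {V : Type*} (G : SimpleGraph V) (v u₁ u₂ u₃ u₄ : V)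
    (hnb : G.neighborSet v = {u₁, u₂, u₃, u₄})
    (h12' : u₁ ≠ u₂) (h13' : u₁ ≠ u₃) (h14' : u₁ ≠ u₄)
    (h23' : u₂ ≠ u₃) (h24' : u₂ ≠ u₄) (h34' : u₃ ≠ u₄)
    (h12 : G.Adj u₁ u₂) (h23 : G.Adj u₂ u₃) (h34 : G.Adj u₃ u₄) (h41 : G.Adj u₄ u₁)
    (B : Set V) (hBsub : B ⊆ G.neighborSet v) (hB1 : B.ncard ≤ 1)
    (L : Finset ℕ) (hL : L.card = 3) (φ₀ : V → ℕ) :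
    {c ∈ (L : Set ℕ) | Dangerous G φ₀ v B c}.ncard ≤ 2 ∧
    (∃ c ∈ L, ¬ Dangerous G φ₀ v B c) ∧
    ∀ c ∈ L, ¬ Dangerous G φ₀ v B c →
      (∀ x y : V, G.Adj v x → G.Adj v y → x ≠ y → φ₀ x = c → φ₀ y = c →
        SameCluster G φ₀ {v}ᶜ x y) ∧ ∀ x ∈ B, φ₀ x ≠ c := by
  have hadj : ∀ x, G.Adj v x → (x = u₁ ∨ x = u₂ ∨ x = u₃ ∨ x = u₄) := by
    intro x hx
    have hmem : x ∈ G.neighborSet v := hx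
    rw [hnb] at hmem
    simpa using hmem
  have hpair : ∀ c x y, G.Adj v x → G.Adj v y → x ≠ y → φ₀ x = c → φ₀ y = c →
      ¬ SameCluster G φ₀ {v}ᶜ x y →
      (φ₀ u₁ = c ∧ φ₀ u₃ = c) ∨ (φ₀ u₂ = c ∧ φ₀ u₄ = c) := by
    intro c x y hx hy hxy hcx hcy hns
    have notadj : ¬ G.Adj x y := fun hadj' =>
      hns (sameCluster_of_adj G φ₀ v x y hx.ne' hy.ne' hadj' (hcx.trans hcy.symm))
    rcases hadj x hx with rfl | rfl | rfl | rfl <;> rcases hadj y hy with rfl | rfl | rfl | rfl <;>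
      first
        | exact absurd rfl hxy
        | exact absurd h12 notadj | exact absurd h12.symm notadj
        | exact absurd h23 notadj | exact absurd h23.symm notadj
        | exact absurd h34 notadj | exact absurd h34.symm notadj
        | exact absurd h41 notadj | exact absurd h41.symm notadj
        | exact Or.inl ⟨hcx, hcy⟩ | exact Or.inl ⟨hcy, hcx⟩
        | exact Or.inr ⟨hcx, hcy⟩ | exact Or.inr ⟨hcy, hcx⟩
  obtain ⟨c₁, c₂, hcc⟩ : ∃ c₁ c₂, ∀ c, Dangerous G φ₀ v B c → c = c₁ ∨ c = c₂ := by
    have hBfin : B.Finite := Set.Finite.subset (by rw [hnb]; exact Set.toFinite _) hBsub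
    rcases B.eq_empty_or_nonempty with hBe | ⟨b, hb⟩
    · refine ⟨φ₀ u₁, φ₀ u₂, ?_⟩
      rintro c (⟨x, y, hx, hy, hxy, hcx, hcy, hns⟩ | ⟨x, hxB, _⟩)
      · rcases hpair c x y hx hy hxy hcx hcy hns with ⟨h, _⟩ | ⟨h, _⟩
        · exact Or.inl h.symm
        · exact Or.inr h.symm
      · simp [hBe] at hxB
    · have hone : ∀ x ∈ B, x = b := fun x hx => (Set.ncard_le_one hBfin).mp hB1 x hx b hb
      have hbadj : G.Adj v b := hBsub hb
      rcases hadj b hbadj with rfl | rfl | rfl | rfl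
      · refine ⟨φ₀ b, φ₀ u₂, ?_⟩
        rintro c (⟨x, y, hx, hy, hxy, hcx, hcy, hns⟩ | ⟨x, hxB, hcx⟩)
        · rcases hpair c x y hx hy hxy hcx hcy hns with ⟨h, _⟩ | ⟨h, _⟩
          · exact Or.inl h.symm
          · exact Or.inr h.symm
        · exact Or.inl (by rw [← hcx, hone x hxB])
      · refine ⟨φ₀ b, φ₀ u₁, ?_⟩
        rintro c (⟨x, y, hx, hy, hxy, hcx, hcy, hns⟩ | ⟨x, hxB, hcx⟩)
        · rcases hpair c x y hx hy hxy hcx hcy hns with ⟨h, _⟩ | ⟨h, _⟩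
          · exact Or.inr h.symm
          · exact Or.inl h.symm
        · exact Or.inl (by rw [← hcx, hone x hxB])
      · refine ⟨φ₀ b, φ₀ u₂, ?_⟩
        rintro c (⟨x, y, hx, hy, hxy, hcx, hcy, hns⟩ | ⟨x, hxB, hcx⟩)
        · rcases hpair c x y hx hy hxy hcx hcy hns with ⟨_, h⟩ | ⟨h, _⟩
          · exact Or.inl h.symm
          · exact Or.inr h.symm
        · exact Or.inl (by rw [← hcx, hone x hxB])
      · refine ⟨φ₀ b, φ₀ u₁, ?_⟩
        rintro c (⟨x, y, hx, hy, hxy, hcx, hcy, hns⟩ | ⟨x, hxB, hcx⟩)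
        · rcases hpair c x y hx hy hxy hcx hcy hns with ⟨h, _⟩ | ⟨_, h⟩
          · exact Or.inr h.symm
          · exact Or.inl h.symm
        · exact Or.inl (by rw [← hcx, hone x hxB])
  have hDsub : {c ∈ (L : Set ℕ) | Dangerous G φ₀ v B c} ⊆ {c₁, c₂} := fun c hc => hcc c hc.2
  have h2 : {c ∈ (L : Set ℕ) | Dangerous G φ₀ v B c}.ncard ≤ 2 :=
    le_trans (Set.ncard_le_ncard hDsub (Set.toFinite _))
      (le_trans (Set.ncard_insert_le _ _) (by simp))
  have hex : ∃ c ∈ L, ¬ Dangerous G φ₀ v B c := by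
    by_contra h
    push_neg at h
    have heq : {c ∈ (L : Set ℕ) | Dangerous G φ₀ v B c} = (L : Set ℕ) := by
      ext c
      simp only [Set.mem_setOf_eq, Finset.mem_coe]
      exact ⟨fun h' => h'.1, fun h' => ⟨h', h c h'⟩⟩
    rw [heq, Set.ncard_coe_finset, hL] at h2
    omega
  refine ⟨h2, hex, fun c _ hnd =>
    ⟨fun x y hx hy hxy hcx hcy => ?_, fun x hxB hcx => hnd (Or.inr ⟨x, hxB, hcx⟩)⟩⟩
  by_contra hns
  exact hnd (Or.inl ⟨x, y, hx, hy, hxy, hcx, hcy, hns⟩)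
end
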